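/- arXiv:1810.05897 — 3 statements merged into one kernel-verified Lean document; each statement's English description precedes it below -/
import Mathlib

section
/- For any trace-free symmetric 3×3 real matrix A and any vector X ∈ ℝ³, we have |X^T A X| ≤ (√6/3)·‖A‖·|X|², where ‖A‖ is the Frobenius norm of A and |X| the Euclidean norm of X. -/
open Real Finset

/-- Sharp estimate for trace-free symmetric 3×3 matrices:
`|Xᵀ A X| ≤ (√6/3)·‖A‖_F·|X|²`. -/
theorem tracefree_sym_quadform_bound
    (A : Matrix (Fin 3) (Fin 3) ℝ) (hA : A.IsSymm) (htr : A.trace = 0)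
    (X : Fin 3 → ℝ) :
    |∑ i, ∑ j, X i * A i j * X j| ≤
      (Real.sqrt 6 / 3) * Real.sqrt (∑ i, ∑ j, (A i j) ^ 2) * (∑ i, (X i) ^ 2) := by
  set S := ∑ i, X i ^ 2 with hS
  have hS3 : S = X 0 ^ 2 + X 1 ^ 2 + X 2 ^ 2 := by rw [hS, Fin.sum_univ_three]
  have hS0 : 0 ≤ S := by nlinarith [sq_nonneg (X 0), sq_nonneg (X 1), sq_nonneg (X 2)]
  set g : Fin 3 × Fin 3 → ℝ :=
    fun p => X p.1 * X p.2 - (if p.1 = p.2 then S / 3 else 0) with hg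
  have htr' : A 0 0 + A 1 1 + A 2 2 = 0 := by
    simpa [Matrix.trace, Matrix.diag, Fin.sum_univ_three] using htr
  have key : ∑ i, ∑ j, X i * A i j * X j = ∑ p : Fin 3 × Fin 3, A p.1 p.2 * g p := by
    rw [Fintype.sum_prod_type]
    simp only [Fin.sum_univ_three, hg]
    norm_num [Fin.ext_iff]
    linear_combination (S / 3) * htr'
  have hgsq : ∑ p : Fin 3 × Fin 3, (g p) ^ 2 = 2 / 3 * S ^ 2 := by
    rw [Fintype.sum_prod_type]
    simp only [Fin.sum_univ_three, hg]
    norm_num [Fin.ext_iff]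
    linear_combination (2 * S / 3 - (X 0 ^ 2 + X 1 ^ 2 + X 2 ^ 2) - S) * hS3
  have cs := Finset.sum_mul_sq_le_sq_mul_sq Finset.univ (fun p : Fin 3 × Fin 3 => A p.1 p.2) g
  have hAsq : ∑ i, ∑ j, (A i j) ^ 2 = ∑ p : Fin 3 × Fin 3, (A p.1 p.2) ^ 2 := by
    rw [Fintype.sum_prod_type]
  have hA0 : 0 ≤ ∑ p : Fin 3 × Fin 3, (A p.1 p.2) ^ 2 :=
    Finset.sum_nonneg fun _ _ => sq_nonneg _
  rw [key, hAsq]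
  have habs : |∑ p : Fin 3 × Fin 3, A p.1 p.2 * g p| ≤
      Real.sqrt ((∑ p : Fin 3 × Fin 3, (A p.1 p.2) ^ 2) * (2 / 3 * S ^ 2)) := by
    rw [← hgsq]
    calc |∑ p : Fin 3 × Fin 3, A p.1 p.2 * g p|
        = Real.sqrt ((∑ p : Fin 3 × Fin 3, A p.1 p.2 * g p) ^ 2) := (Real.sqrt_sq_eq_abs _).symm
      _ ≤ _ := Real.sqrt_le_sqrt cs
  refine habs.trans (le_of_eq ?_)
  rw [Real.sqrt_mul hA0, Real.sqrt_mul (by norm_num : (0:ℝ) ≤ 2/3),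
    Real.sqrt_sq hS0]
  have h23 : Real.sqrt (2 / 3) = Real.sqrt 6 / 3 := by
    rw [show (2:ℝ)/3 = 6/9 by norm_num, Real.sqrt_div (by norm_num : (0:ℝ) ≤ 6),
      show (9:ℝ) = 3 ^ 2 by norm_num, Real.sqrt_sq (by norm_num : (0:ℝ) ≤ 3)]
  rw [h23]; ring
end

section
/- For a trace-free symmetric 3×3 real matrix A with eigenvalues λ₁ ≤ λ₂ ≤ λ₃, the determinant satisfies det A ≤ (√6/18)·‖A‖³, where ‖A‖ is the Frobenius norm. -/
open Real Finset

lemma key_ineq (a b c : ℝ) (h : a + b + c = 0) :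
    a * b * c ≤ (Real.sqrt 6 / 18) * (Real.sqrt (a ^ 2 + b ^ 2 + c ^ 2)) ^ 3 := by
  set s : ℝ := a ^ 2 + b ^ 2 + c ^ 2 with hs
  have hs0 : 0 ≤ s := by positivity
  have hR : 0 ≤ (Real.sqrt 6 / 18) * (Real.sqrt s) ^ 3 := by positivity
  rcases le_or_gt (a * b * c) 0 with hp | hp
  · exact hp.trans hR
  · have hsq : (a * b * c) ^ 2 ≤ ((Real.sqrt 6 / 18) * (Real.sqrt s) ^ 3) ^ 2 := by
      have h6 : (Real.sqrt 6) ^ 2 = 6 := Real.sq_sqrt (by norm_num)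
      have hss : (Real.sqrt s) ^ 2 = s := Real.sq_sqrt hs0
      have hexp : ((Real.sqrt 6 / 18) * (Real.sqrt s) ^ 3) ^ 2 = s ^ 3 / 54 := by
        have : ((Real.sqrt s) ^ 3) ^ 2 = ((Real.sqrt s) ^ 2) ^ 3 := by ring
        rw [mul_pow, div_pow, h6, this, hss]; ring
      rw [hexp]
      have hc : c = -(a + b) := by linarith
      subst hc
      nlinarith [sq_nonneg ((a - b) * (2 * a + b) * (a + 2 * b)), sq_nonneg (a + b),
        sq_nonneg (a - b)]
    calc a * b * c ≤ |a * b * c| := le_abs_self _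
      _ = Real.sqrt ((a * b * c) ^ 2) := (Real.sqrt_sq_eq_abs _).symm
      _ ≤ Real.sqrt (((Real.sqrt 6 / 18) * (Real.sqrt s) ^ 3) ^ 2) := Real.sqrt_le_sqrt hsq
      _ = (Real.sqrt 6 / 18) * (Real.sqrt s) ^ 3 := Real.sqrt_sq hR

/-- For a trace-free symmetric 3×3 real matrix, `det A ≤ (√6/18)·‖A‖_F³`. -/
theorem tracefree_sym_det_bound
    (A : Matrix (Fin 3) (Fin 3) ℝ) (hA : A.IsSymm) (htr : A.trace = 0) :
    A.det ≤ (Real.sqrt 6 / 18) * (Real.sqrt (∑ i, ∑ j, (A i j) ^ 2)) ^ 3 := by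
  have hH : A.IsHermitian := by
    rw [Matrix.IsHermitian, Matrix.conjTranspose_eq_transpose_of_trivial]; exact hA
  set U : Matrix (Fin 3) (Fin 3) ℝ := (hH.eigenvectorUnitary : Matrix (Fin 3) (Fin 3) ℝ)
  have hUU : (star U) * U = 1 := Matrix.mem_unitaryGroup_iff'.mp hH.eigenvectorUnitary.2
  set lam : Fin 3 → ℝ := hH.eigenvalues
  have hspec : A = U * Matrix.diagonal lam * (star U) := by
    have := hH.spectral_theorem
    simpa using this
  -- trace of A equals sum of eigenvalues
  have htrace : ∑ i, lam i = 0 := by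
    have : A.trace = (Matrix.diagonal lam).trace := by
      rw [hspec, Matrix.trace_mul_cycle, hUU, one_mul]
    rw [this, Matrix.trace_diagonal] at htr
    exact htr
  -- Frobenius norm squared equals sum of squared eigenvalues
  have hfrob : ∑ i, ∑ j, (A i j) ^ 2 = ∑ i, (lam i) ^ 2 := by
    have h1 : ∑ i, ∑ j, (A i j) ^ 2 = (A * A).trace := by
      rw [Matrix.trace]
      refine Finset.sum_congr rfl fun i _ => ?_
      simp only [Matrix.diag_apply, Matrix.mul_apply]
      refine Finset.sum_congr rfl fun j _ => ?_
      have : A j i = A i j := by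
        conv_lhs => rw [← hA]
        rfl
      rw [this]; ring
    have h2 : (A * A).trace = ∑ i, (lam i) ^ 2 := by
      have hUU' : ∀ X : Matrix (Fin 3) (Fin 3) ℝ, star U * (U * X) = X := fun X => by
        rw [← mul_assoc, hUU, one_mul]
      have e : (U * Matrix.diagonal lam * star U) * (U * Matrix.diagonal lam * star U)
          = U * (Matrix.diagonal lam * Matrix.diagonal lam) * star U := by
        simp only [mul_assoc, hUU']
      conv_lhs => rw [hspec]
      rw [e, Matrix.trace_mul_cycle, hUU, one_mul,
        Matrix.diagonal_mul_diagonal, Matrix.trace_diagonal]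
      exact Finset.sum_congr rfl fun i _ => (sq (lam i)).symm
    rw [h1, h2]
  -- determinant equals product of eigenvalues
  have hdet : A.det = lam 0 * lam 1 * lam 2 := by
    have := hH.det_eq_prod_eigenvalues
    simpa [Fin.prod_univ_three, mul_assoc] using this
  have hsum3 : ∑ i, (lam i) ^ 2 = lam 0 ^ 2 + lam 1 ^ 2 + lam 2 ^ 2 := by
    simp [Fin.sum_univ_three]
  have htr3 : lam 0 + lam 1 + lam 2 = 0 := by
    rw [← htrace]; simp [Fin.sum_univ_three]
  rw [hdet, hfrob, hsum3]
  exact key_ineq _ _ _ htr3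
end

section
/- If real numbers λ₁ ≤ λ₂ ≤ λ₃ satisfy λ₁+λ₂+λ₃ = 0 and b₁ ≤ b₂ ≤ b₃ are nonnegative reals, then 4(λ₁b₁² + λ₂b₂² + λ₃b₃²) ≤ (√6/3)·(λ₁²+λ₂²+λ₃²)^{1/2}·(4(b₁²+b₂²+b₃²)). -/
open Real

/-- Eigenvalue pairing inequality (4.13):
if `λ₁ ≤ λ₂ ≤ λ₃` sum to zero and `0 ≤ b₁ ≤ b₂ ≤ b₃`, then
`4(λ₁b₁² + λ₂b₂² + λ₃b₃²) ≤ (√6/3)·(λ₁²+λ₂²+λ₃²)^{1/2}·4(b₁²+b₂²+b₃²)`. -/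
theorem eigenvalue_pairing_bound
    (l1 l2 l3 b1 b2 b3 : ℝ)
    (hl12 : l1 ≤ l2) (hl23 : l2 ≤ l3) (hsum : l1 + l2 + l3 = 0)
    (hb1 : 0 ≤ b1) (hb12 : b1 ≤ b2) (hb23 : b2 ≤ b3) :
    4 * (l1 * b1 ^ 2 + l2 * b2 ^ 2 + l3 * b3 ^ 2) ≤
      (Real.sqrt 6 / 3) * Real.sqrt (l1 ^ 2 + l2 ^ 2 + l3 ^ 2) *
        (4 * (b1 ^ 2 + b2 ^ 2 + b3 ^ 2)) := by
  have hl3 : 0 ≤ l3 := by linarith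
  set S := Real.sqrt (l1 ^ 2 + l2 ^ 2 + l3 ^ 2) with hS
  have hSnn : 0 ≤ S := Real.sqrt_nonneg _
  have hkey : l3 ≤ Real.sqrt 6 / 3 * S := by
    have h6 : Real.sqrt 6 * S = Real.sqrt (6 * (l1 ^ 2 + l2 ^ 2 + l3 ^ 2)) := by
      rw [hS, ← Real.sqrt_mul (by norm_num)]
    have h1 : (3 * l3) ^ 2 ≤ 6 * (l1 ^ 2 + l2 ^ 2 + l3 ^ 2) := by
      nlinarith [sq_nonneg (l1 - l2), sq_nonneg (l1 + l2 + 2 * l3)]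
    have h2 : 3 * l3 ≤ Real.sqrt (6 * (l1 ^ 2 + l2 ^ 2 + l3 ^ 2)) := by
      calc 3 * l3 = Real.sqrt ((3 * l3) ^ 2) := (Real.sqrt_sq (by positivity)).symm
        _ ≤ _ := Real.sqrt_le_sqrt h1
    rw [← h6] at h2
    linarith
  have hb2 : 0 ≤ b2 := le_trans hb1 hb12
  have hb3 : 0 ≤ b3 := le_trans hb2 hb23
  nlinarith [mul_le_mul_of_nonneg_right hkey (by positivity : (0:ℝ) ≤ b1^2 + b2^2 + b3^2),
    sq_nonneg b1, sq_nonneg b2, sq_nonneg b3,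
    mul_le_mul_of_nonneg_right hl23 (sq_nonneg b2),
    mul_le_mul_of_nonneg_right (hl12.trans hl23) (sq_nonneg b1)]
end
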